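/- Let k be a field of characteristic zero and θ ∈ k* an element of infinite order. Then there is no subset Γ ⊆ ℤ² such that the cyclic subgroup generated by (θ, 1) in k* × k* equals the set {(μ₁,μ₂) ∈ k* × k* | μ₁^u μ₂^v = 1 for all (u,v) ∈ Γ}. -/
import Mathlib

/-- An element of infinite order has no nontrivial integer power equal to one. -/
lemma zpow_ne_one_of_infinite_order {k : Type*} [Field k]
    (θ : kˣ) (hθ : ∀ n : ℕ, 0 < n → θ ^ n ≠ 1) (m : ℤ) (hm : m ≠ 0) :
    θ ^ m ≠ 1 := by
  intro h
  have habs : θ ^ (m.natAbs : ℤ) = 1 := by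
    rcases Int.natAbs_eq m with he | he
    · rw [← he]; exact h
    · rw [← neg_neg ((m.natAbs : ℤ)), ← he, zpow_neg, h, inv_one]
  rw [zpow_natCast] at habs
  exact hθ m.natAbs (by omega) habs

/-- If `θ ∈ k*` has infinite order, the cyclic subgroup generated by `(θ,1)` in `k* × k*`
is not the common kernel of any family of characters `χ_{u,v}`. -/
theorem zpowers_not_character_kernel
    {k : Type*} [Field k] [CharZero k]
    (θ : kˣ) (hθ : ∀ n : ℕ, 0 < n → θ ^ n ≠ 1) :
    ¬ ∃ Γ : Set (ℤ × ℤ),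
        (Subgroup.zpowers ((θ, 1) : kˣ × kˣ) : Set (kˣ × kˣ)) =
          {p : kˣ × kˣ | ∀ uv ∈ Γ, p.1 ^ uv.1 * p.2 ^ uv.2 = 1} := by
  rintro ⟨Γ, hΓ⟩
  -- (θ, 1) is in the subgroup, so it satisfies all the character equations.
  have hmem : ((θ, 1) : kˣ × kˣ) ∈ {p : kˣ × kˣ | ∀ uv ∈ Γ, p.1 ^ uv.1 * p.2 ^ uv.2 = 1} := by
    rw [← hΓ]; exact Subgroup.mem_zpowers _
  -- hence every first exponent in Γ is zero
  have hu0 : ∀ uv ∈ Γ, uv.1 = 0 := by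
    intro uv huv
    have h := hmem uv huv
    simp only [one_zpow, mul_one] at h
    by_contra hne
    exact zpow_ne_one_of_infinite_order θ hθ uv.1 hne h
  -- then (-1, 1) satisfies all the equations
  have hneg : ((-1, 1) : kˣ × kˣ) ∈ {p : kˣ × kˣ | ∀ uv ∈ Γ, p.1 ^ uv.1 * p.2 ^ uv.2 = 1} := by
    intro uv huv
    rw [hu0 uv huv]
    simp
  rw [← hΓ] at hneg
  obtain ⟨n, hn⟩ := hneg
  have h1 : θ ^ n = -1 := congrArg Prod.fst hn
  have h2 : θ ^ (2 * n) ≠ 1 ∨ n = 0 := by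
    by_cases hn0 : n = 0
    · exact Or.inr hn0
    · exact Or.inl (zpow_ne_one_of_infinite_order θ hθ (2 * n) (by omega))
  rcases h2 with h2 | h2
  · apply h2
    rw [mul_comm, zpow_mul, h1]
    rw [show (2:ℤ) = (2:ℕ) by norm_num, zpow_natCast]
    simp [sq]
  · rw [h2] at h1
    simp at h1
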